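/- arXiv:1701.08952 — 2 statements merged into one kernel-verified Lean document; each statement's English description precedes it below -/
import Mathlib

section
/- If a forward complete control system Σ=(X,𝒰,φ) has the uniform asymptotic gain (UAG) property and is continuous at the equilibrium (CEP), then Σ is uniformly locally stable (ULS). -/
open Set Filter

/-- Class `K`: continuous, strictly increasing on `[0,∞)` and vanishing at `0`. -/
def ClassK (γ : ℝ → ℝ) : Prop :=
  ContinuousOn γ (Ici 0) ∧ StrictMonoOn γ (Ici 0) ∧ γ 0 = 0

/-- Class `K∞`: class `K` and unbounded. -/
def ClassKinf (γ : ℝ → ℝ) : Prop :=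
  ClassK γ ∧ ∀ c : ℝ, ∃ r : ℝ, 0 ≤ r ∧ c ≤ γ r

/-- The class `K∞ ∪ {0}`. -/
def ClassKinf0 (γ : ℝ → ℝ) : Prop :=
  ClassKinf γ ∨ ∀ r : ℝ, 0 ≤ r → γ r = 0

/-- The class `K ∪ {0}`. -/
def ClassK0 (γ : ℝ → ℝ) : Prop :=
  ClassK γ ∨ ∀ r : ℝ, 0 ≤ r → γ r = 0

/-- Class `L`: continuous, strictly decreasing on `[0,∞)` with limit `0` at infinity. -/
def ClassL (γ : ℝ → ℝ) : Prop :=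
  ContinuousOn γ (Ici 0) ∧ StrictAntiOn γ (Ici 0) ∧ Tendsto γ atTop (nhds 0)

/-- Class `KL`. -/
def ClassKL (β : ℝ → ℝ → ℝ) : Prop :=
  ContinuousOn (fun p : ℝ × ℝ => β p.1 p.2) ((Ici 0) ×ˢ (Ici 0)) ∧
  (∀ t : ℝ, 0 ≤ t → ClassK (fun r => β r t)) ∧
  ∀ r : ℝ, 0 < r → StrictAntiOn (β r) (Ici 0) ∧ Tendsto (β r) atTop (nhds 0)

/-- A forward complete control system `Σ = (X, 𝒰, φ)`: inputs are functions
`u : ℝ₊ → U` (modelled as functions on `ℝ`, with only `t ≥ 0` relevant);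
the set `inputs` of admissible inputs carries a norm `Unorm`, is shift invariant and
closed under concatenation; the transition map `phi` satisfies the identity property,
causality, continuity in time and the cocycle property. -/
structure ControlSystem (X U : Type*) [NormedAddCommGroup X] [NormedSpace ℝ X] [Zero U] where
  /-- the set of admissible input functions -/
  inputs : Set (ℝ → U)
  /-- the norm of the input space -/
  Unorm : (ℝ → U) → ℝ
  Unorm_nonneg : ∀ u, 0 ≤ Unorm u
  /-- the zero input is admissible -/
  zero_mem : (fun _ : ℝ => (0 : U)) ∈ inputs
  Unorm_zero : Unorm (fun _ : ℝ => (0 : U)) = 0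
  /-- the transition map `φ(t,x,u)` -/
  phi : ℝ → X → (ℝ → U) → X
  /-- axiom of shift invariance -/
  shift_mem : ∀ u ∈ inputs, ∀ τ : ℝ, 0 ≤ τ → (fun s => u (s + τ)) ∈ inputs
  shift_norm : ∀ u ∈ inputs, ∀ τ : ℝ, 0 ≤ τ → Unorm (fun s => u (s + τ)) ≤ Unorm u
  /-- axiom of concatenation -/
  concat_mem : ∀ u₁ ∈ inputs, ∀ u₂ ∈ inputs, ∀ t : ℝ, 0 < t →
    (fun s => if s ≤ t then u₁ s else u₂ (s - t)) ∈ inputs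
  /-- identity property -/
  identity : ∀ x u, phi 0 x u = x
  /-- causality -/
  causality : ∀ t : ℝ, 0 ≤ t → ∀ x : X, ∀ u ∈ inputs, ∀ v ∈ inputs,
    (∀ s ∈ Icc (0:ℝ) t, u s = v s) → phi t x u = phi t x v
  /-- continuity of trajectories -/
  cont : ∀ x : X, ∀ u ∈ inputs, ContinuousOn (fun t => phi t x u) (Ici 0)
  /-- cocycle property -/
  cocycle : ∀ t : ℝ, 0 ≤ t → ∀ h : ℝ, 0 ≤ h → ∀ x : X, ∀ u ∈ inputs,
    phi h (phi t x u) (fun s => u (s + t)) = phi (t + h) x u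

namespace ControlSystem

variable {X U : Type*} [NormedAddCommGroup X] [NormedSpace ℝ X] [Zero U]

/-- the zero input -/
def zeroIn : ℝ → U := fun _ => 0

/-- Uniform asymptotic gain property. -/
def UAG (S : ControlSystem X U) : Prop :=
  ∃ γ, ClassKinf0 γ ∧
    ∀ ε : ℝ, 0 < ε → ∀ r : ℝ, 0 < r → ∃ τ : ℝ, 0 ≤ τ ∧
      ∀ u ∈ S.inputs, ∀ x : X, ‖x‖ < r → ∀ t : ℝ, τ ≤ t →
        ‖S.phi t x u‖ ≤ ε + γ (S.Unorm u)

/-- Continuity at the equilibrium: `0` is an equilibrium of the undisturbed system and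
the flow is continuous at `(x,u) = (0,0)`, uniformly on compact time intervals. -/
def CEP (S : ControlSystem X U) : Prop :=
  (∀ t : ℝ, 0 ≤ t → S.phi t 0 zeroIn = 0) ∧
  ∀ ε : ℝ, 0 < ε → ∀ h : ℝ, 0 < h → ∃ δ : ℝ, 0 < δ ∧
    ∀ t ∈ Icc (0:ℝ) h, ∀ x : X, ‖x‖ ≤ δ → ∀ u ∈ S.inputs, S.Unorm u ≤ δ →
      ‖S.phi t x u‖ ≤ ε

/-- Uniform local stability. -/
def ULS (S : ControlSystem X U) : Prop :=
  ∃ σ γ, ClassKinf σ ∧ ClassKinf0 γ ∧ ∃ r : ℝ, 0 < r ∧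
    ∀ t : ℝ, 0 ≤ t → ∀ x : X, ‖x‖ ≤ r → ∀ u ∈ S.inputs, S.Unorm u ≤ r →
      ‖S.phi t x u‖ ≤ σ ‖x‖ + γ (S.Unorm u)

end ControlSystem

/-!
UAG controls the trajectories after some time `τ`, uniformly over bounded initial states, and CEP
controls them on `[0, τ]` for small data; together, small data give `‖φ‖ ≤ ε + γ(‖u‖)`. The
least such `ε`, as a function of the size of the data, is nondecreasing and tends to `0` at `0`.
Averaging it over the dilations `[s, 2s]` makes it continuous, and adding `s` makes it a `K∞`
majorant `σ`, whence `‖φ(t,x,u)‖ ≤ σ(‖x‖) + (σ + γ)(‖u‖)`.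
-/

lemma ClassK.monotoneOn {γ : ℝ → ℝ} (hγ : ClassK γ) : MonotoneOn γ (Ici 0) :=
  hγ.2.1.monotoneOn

lemma ClassK.nonneg {γ : ℝ → ℝ} (hγ : ClassK γ) {s : ℝ} (hs : 0 ≤ s) : 0 ≤ γ s :=
  hγ.2.2 ▸ hγ.monotoneOn self_mem_Ici hs hs

lemma ClassK.map_max_le_add {γ : ℝ → ℝ} (hγ : ClassK γ) {a b : ℝ} (ha : 0 ≤ a) (hb : 0 ≤ b) :
    γ (max a b) ≤ γ a + γ b := by
  rcases max_choice a b with h | h <;> rw [h]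
  · linarith [hγ.nonneg hb]
  · linarith [hγ.nonneg ha]

lemma classKinf_id : ClassKinf fun s => s :=
  ⟨⟨continuousOn_id, strictMonoOn_id, rfl⟩, fun c => ⟨max c 0, le_max_right c 0, le_max_left c 0⟩⟩

lemma ClassKinf0.continuousOn {γ : ℝ → ℝ} (hγ : ClassKinf0 γ) : ContinuousOn γ (Ici 0) := by
  rcases hγ with hγ | hγ
  · exact hγ.1.1
  · exact continuousOn_const.congr fun s hs => hγ s hs

lemma ClassKinf0.monotoneOn {γ : ℝ → ℝ} (hγ : ClassKinf0 γ) : MonotoneOn γ (Ici 0) := by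
  rcases hγ with hγ | hγ
  · exact hγ.1.monotoneOn
  · intro a ha b hb _
    rw [hγ a ha, hγ b hb]

lemma ClassKinf0.map_zero {γ : ℝ → ℝ} (hγ : ClassKinf0 γ) : γ 0 = 0 := by
  rcases hγ with hγ | hγ
  · exact hγ.1.2.2
  · exact hγ 0 le_rfl

lemma ClassKinf.add_of_monotoneOn {σ f : ℝ → ℝ} (hσ : ClassKinf σ) (hfc : ContinuousOn f (Ici 0))
    (hfm : MonotoneOn f (Ici 0)) (hf0 : f 0 = 0) : ClassKinf fun s => σ s + f s := by
  obtain ⟨⟨hσc, hσm, hσ0⟩, hσu⟩ := hσ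
  refine ⟨⟨hσc.add hfc, fun a ha b hb hab => add_lt_add_of_lt_of_le (hσm ha hb hab)
    (hfm ha hb hab.le), by simp [hσ0, hf0]⟩, fun c => ?_⟩
  obtain ⟨r, hr, hcr⟩ := hσu c
  have : 0 ≤ f r := hf0 ▸ hfm self_mem_Ici hr hr
  exact ⟨r, hr, by linarith⟩

lemma Monotone.continuousWithinAt_Ici_of_forall_exists_le {g : ℝ → ℝ} (hg : Monotone g) {a : ℝ}
    (h : ∀ ε > 0, ∃ δ > 0, g (a + δ) ≤ g a + ε) : ContinuousWithinAt g (Ici a) a := by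
  refine tendsto_order.2 ⟨fun c hc => ?_, fun c hc => ?_⟩
  · exact eventually_nhdsWithin_of_forall fun x (hx : a ≤ x) => hc.trans_le (hg hx)
  · obtain ⟨δ, hδ, hgδ⟩ := h ((c - g a) / 2) (by linarith)
    filter_upwards [nhdsWithin_le_nhds (Iio_mem_nhds (lt_add_of_pos_right a hδ))] with x hx
    linarith [hg (le_of_lt (mem_Iio.1 hx))]

section DilationAverage

open MeasureTheory intervalIntegral Topology

noncomputable def dilationAverage (g : ℝ → ℝ) (s : ℝ) : ℝ := ∫ τ in (1 : ℝ)..2, g (s * τ)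

variable {g : ℝ → ℝ}

lemma dilationAverage_zero (g : ℝ → ℝ) : dilationAverage g 0 = g 0 := by
  norm_num [dilationAverage]

lemma Monotone.intervalIntegrable_comp_mul (hg : Monotone g) {s : ℝ} (hs : 0 ≤ s) (a b : ℝ) :
    IntervalIntegrable (fun τ => g (s * τ)) volume a b :=
  (hg.comp fun _ _ h => mul_le_mul_of_nonneg_left h hs).intervalIntegrable

lemma Monotone.le_dilationAverage (hg : Monotone g) {s : ℝ} (hs : 0 ≤ s) :
    g s ≤ dilationAverage g s := by
  calc g s = ∫ _ in (1 : ℝ)..2, g s := by norm_num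
    _ ≤ dilationAverage g s := integral_mono_on (by norm_num) intervalIntegrable_const
        (hg.intervalIntegrable_comp_mul hs 1 2) fun τ hτ => hg (le_mul_of_one_le_right hs hτ.1)

lemma Monotone.dilationAverage_le (hg : Monotone g) {s : ℝ} (hs : 0 ≤ s) :
    dilationAverage g s ≤ g (s * 2) := by
  calc dilationAverage g s ≤ ∫ _ in (1 : ℝ)..2, g (s * 2) :=
        integral_mono_on (by norm_num) (hg.intervalIntegrable_comp_mul hs 1 2)
          intervalIntegrable_const fun τ hτ => hg (mul_le_mul_of_nonneg_left hτ.2 hs)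
    _ = g (s * 2) := by norm_num

lemma Monotone.monotoneOn_dilationAverage (hg : Monotone g) :
    MonotoneOn (dilationAverage g) (Ici 0) := fun a ha b hb hab =>
  integral_mono_on (by norm_num) (hg.intervalIntegrable_comp_mul ha 1 2)
    (hg.intervalIntegrable_comp_mul hb 1 2) fun τ hτ =>
      hg (mul_le_mul_of_nonneg_right hab (zero_le_one.trans hτ.1))

lemma Monotone.dilationAverage_eq (hg : Monotone g) {s : ℝ} (hs : s ≠ 0) :
    dilationAverage g s =
      s⁻¹ * ((∫ x in (0 : ℝ)..s * 2, g x) - ∫ x in (0 : ℝ)..s * 1, g x) := by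
  rw [dilationAverage, integral_comp_mul_left _ hs, smul_eq_mul,
    integral_interval_sub_left hg.intervalIntegrable hg.intervalIntegrable]

lemma Monotone.continuousOn_dilationAverage (hg : Monotone g)
    (hg0 : ContinuousWithinAt g (Ici 0) 0) : ContinuousOn (dilationAverage g) (Ici 0) := by
  intro s hs
  rcases (mem_Ici.1 hs).eq_or_lt with rfl | hs
  · have hdil : Tendsto (fun s : ℝ => s * 2) (𝓝[≥] 0) (𝓝[≥] 0) :=
      tendsto_nhdsWithin_of_tendsto_nhds_of_eventually_within _
        (((continuous_mul_const (2 : ℝ)).tendsto' 0 0 (zero_mul 2)).mono_left nhdsWithin_le_nhds)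
        (eventually_nhdsWithin_of_forall fun x (hx : 0 ≤ x) => by simpa using hx)
    rw [ContinuousWithinAt, dilationAverage_zero]
    refine tendsto_of_tendsto_of_tendsto_of_le_of_le' hg0 (hg0.tendsto.comp hdil)
      ?_ ?_ <;> filter_upwards [self_mem_nhdsWithin] with x (hx : 0 ≤ x)
    · exact hg.le_dilationAverage hx
    · exact hg.dilationAverage_le hx
  · have hprim := continuous_primitive (fun a b => hg.intervalIntegrable (μ := volume)) 0
    have hcont : ContinuousAt (fun t : ℝ =>
        t⁻¹ * ((∫ x in (0 : ℝ)..t * 2, g x) - ∫ x in (0 : ℝ)..t * 1, g x)) s :=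
      (continuousAt_inv₀ hs.ne').mul ((hprim.comp (continuous_mul_const 2)).sub
        (hprim.comp (continuous_mul_const 1))).continuousAt
    refine (hcont.congr ?_).continuousWithinAt
    filter_upwards [Ioi_mem_nhds hs] with t ht
    exact (hg.dilationAverage_eq (ne_of_gt ht)).symm

theorem Monotone.exists_classKinf_ge (hg : Monotone g) (hg0 : g 0 = 0)
    (hgc : ContinuousWithinAt g (Ici 0) 0) : ∃ σ, ClassKinf σ ∧ ∀ s, 0 ≤ s → g s ≤ σ s :=
  ⟨fun s => s + dilationAverage g s,
    classKinf_id.add_of_monotoneOn (hg.continuousOn_dilationAverage hgc)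
      hg.monotoneOn_dilationAverage (by rw [dilationAverage_zero, hg0]),
    fun s hs => by linarith [hg.le_dilationAverage hs]⟩

end DilationAverage

/-- The supremum `g s` of `b` over `{i | a i ≤ min s r}` is the monotone function to be
majorized; `r` is chosen so that these suprema are finite. -/
theorem exists_classKinf_bound_of_forall_exists_le {ι : Type*} {a b : ι → ℝ}
    (ha : ∀ i, 0 ≤ a i) (h : ∀ ε > 0, ∃ δ > 0, ∀ i, a i ≤ δ → b i ≤ ε) :
    ∃ σ, ClassKinf σ ∧ ∃ r > 0, ∀ i, a i ≤ r → b i ≤ σ (a i) := by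
  obtain ⟨r, hr, hbr⟩ := h 1 one_pos
  set A : ℝ → Set ℝ := fun s => insert 0 (b '' {i | a i ≤ min s r})
  have hA : ∀ s, BddAbove (A s) := fun s => ⟨1, by
    rintro _ (rfl | ⟨i, hi, rfl⟩)
    exacts [zero_le_one, hbr i (hi.trans (min_le_right _ _))]⟩
  set g : ℝ → ℝ := fun s => sSup (A s)
  have hg : Monotone g := fun s t hst => csSup_le_csSup (hA t) (insert_nonempty _ _)
    (insert_subset_insert (image_mono fun i hi => hi.trans (min_le_min_right r hst)))
  have hgδ : ∀ ε > 0, ∃ δ > 0, g δ ≤ ε := fun ε hε => by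
    obtain ⟨δ, hδ, hbδ⟩ := h ε hε
    refine ⟨δ, hδ, csSup_le (insert_nonempty _ _) ?_⟩
    rintro _ (rfl | ⟨i, hi, rfl⟩)
    exacts [hε.le, hbδ i (hi.trans (min_le_left _ _))]
  have hg0 : g 0 = 0 := by
    refine le_antisymm (le_of_forall_pos_le_add fun ε hε => ?_) (le_csSup (hA 0) (mem_insert _ _))
    obtain ⟨δ, hδ, hgε⟩ := hgδ ε hε
    linarith [hg hδ.le]
  have hgc : ContinuousWithinAt g (Ici 0) 0 := hg.continuousWithinAt_Ici_of_forall_exists_le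
    fun ε hε => by simpa [hg0] using hgδ ε hε
  obtain ⟨σ, hσ, hgσ⟩ := hg.exists_classKinf_ge hg0 hgc
  exact ⟨σ, hσ, r, hr, fun i hi => (le_csSup (hA _) (mem_insert_of_mem _
    ⟨i, le_min le_rfl hi, rfl⟩)).trans (hgσ _ (ha i))⟩

namespace ControlSystem

variable {X U : Type*} [NormedAddCommGroup X] [NormedSpace ℝ X] [Zero U]

def EpsDeltaULS (S : ControlSystem X U) (γ : ℝ → ℝ) : Prop :=
  ∀ ε > 0, ∃ δ > 0, ∀ t : ℝ, 0 ≤ t → ∀ x : X, ‖x‖ ≤ δ → ∀ u ∈ S.inputs, S.Unorm u ≤ δ →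
    ‖S.phi t x u‖ ≤ ε + γ (S.Unorm u)

lemma UAG.exists_epsDeltaULS {S : ControlSystem X U} (hUAG : S.UAG) (hCEP : S.CEP) :
    ∃ γ, ClassKinf0 γ ∧ S.EpsDeltaULS γ := by
  obtain ⟨γ, hγ, hγUAG⟩ := hUAG
  refine ⟨γ, hγ, fun ε hε => ?_⟩
  obtain ⟨τ, hτ, hτUAG⟩ := hγUAG ε hε 1 one_pos
  obtain ⟨δ, hδ, hδCEP⟩ := hCEP.2 ε hε (τ + 1) (by linarith)
  refine ⟨min δ (1 / 2), by positivity, fun t ht x hx u hu hun => ?_⟩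
  rcases le_or_gt t τ with htτ | hτt
  · have hγu : 0 ≤ γ (S.Unorm u) :=
      hγ.map_zero ▸ hγ.monotoneOn self_mem_Ici (S.Unorm_nonneg u) (S.Unorm_nonneg u)
    have := hδCEP t ⟨ht, by linarith⟩ x (hx.trans (min_le_left _ _)) u hu
      (hun.trans (min_le_left _ _))
    linarith
  · exact hτUAG u hu x ((hx.trans (min_le_right _ _)).trans_lt (by norm_num)) t hτt.le

theorem EpsDeltaULS.uls {S : ControlSystem X U} {γ : ℝ → ℝ} (hγ : ClassKinf0 γ)
    (h : S.EpsDeltaULS γ) : S.ULS := by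
  let ι := {p : ℝ × X × (ℝ → U) // 0 ≤ p.1 ∧ p.2.2 ∈ S.inputs}
  obtain ⟨σ, hσ, r, hr, hbound⟩ := exists_classKinf_bound_of_forall_exists_le
    (ι := ι) (a := fun p => max ‖p.1.2.1‖ (S.Unorm p.1.2.2))
    (b := fun p => ‖S.phi p.1.1 p.1.2.1 p.1.2.2‖ - γ (S.Unorm p.1.2.2))
    (fun p => (norm_nonneg _).trans (le_max_left _ _)) fun ε hε => by
      obtain ⟨δ, hδ, hδε⟩ := h ε hε
      refine ⟨δ, hδ, fun ⟨(t, x, u), ht, hu⟩ hi => ?_⟩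
      have := hδε t ht x (le_of_max_le_left hi) u hu (le_of_max_le_right hi)
      simp only
      linarith
  refine ⟨σ, fun s => σ s + γ s, hσ, Or.inl (hσ.add_of_monotoneOn hγ.continuousOn
    hγ.monotoneOn hγ.map_zero), r, hr, fun t ht x hx u hu hun => ?_⟩
  have hφ := hbound ⟨(t, x, u), ht, hu⟩ (max_le hx hun)
  have hσmax := hσ.1.map_max_le_add (norm_nonneg x) (S.Unorm_nonneg u)
  simp only at hφ ⊢
  linarith

/-- If a forward complete control system is UAG and CEP, then it is ULS. -/
theorem UAG.toULS (S : ControlSystem X U) (h1 : S.UAG) (h2 : S.CEP) : S.ULS := by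
  obtain ⟨γ, hγ, hULS⟩ := h1.exists_epsDeltaULS h2
  exact hULS.uls hγ

end ControlSystem
end

section
/- If a forward complete control system Σ=(X,𝒰,φ) has the uniform limit property (ULIM) and is uniformly globally stable (UGS), then Σ has the uniform asymptotic gain (UAG) property. -/
open Set Filter

namespace ControlSystem

variable {X U : Type*} [NormedAddCommGroup X] [NormedSpace ℝ X] [Zero U]

/-- Uniform limit property. -/
def ULIM (S : ControlSystem X U) : Prop :=
  ∃ γ, ClassK0 γ ∧
    ∀ ε : ℝ, 0 < ε → ∀ r : ℝ, 0 < r → ∃ τ : ℝ, 0 ≤ τ ∧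
      ∀ x : X, ‖x‖ ≤ r → ∀ u ∈ S.inputs, ∃ t ∈ Icc (0:ℝ) τ,
        ‖S.phi t x u‖ ≤ ε + γ (S.Unorm u)

/-- Uniform global stability. -/
def UGS (S : ControlSystem X U) : Prop :=
  ∃ σ γ, ClassKinf σ ∧ ClassKinf0 γ ∧
    ∀ t : ℝ, 0 ≤ t → ∀ x : X, ∀ u ∈ S.inputs,
      ‖S.phi t x u‖ ≤ σ ‖x‖ + γ (S.Unorm u)

/-!
By ULIM, every trajectory starting in the ball of radius `r` reaches, before a uniform time `τ`,
the ball of radius `δ / 2 + η ‖u‖`. Restarting there (cocycle property, shift invariance of the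
inputs), UGS keeps it inside the ball of radius `σ (δ / 2 + η ‖u‖) + γ ‖u‖` forever after, and
`σ (a + b) ≤ σ (2 a) + σ (2 b)` splits this into `σ δ ≤ ε` plus a gain of `‖u‖` alone.
-/

theorem _root_.ClassKinf.classK0 {σ : ℝ → ℝ} (h : ClassKinf σ) : ClassK0 σ :=
  .inl h.1

theorem _root_.ClassKinf0.classK0 {γ : ℝ → ℝ} (h : ClassKinf0 γ) : ClassK0 γ :=
  h.imp (·.1) id

section ClassK0

variable {γ : ℝ → ℝ}

theorem _root_.ClassK0.map_zero (h : ClassK0 γ) : γ 0 = 0 :=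
  h.elim (·.2.2) (· 0 le_rfl)

theorem _root_.ClassK0.monotoneOn (h : ClassK0 γ) : MonotoneOn γ (Ici 0) := by
  rcases h with ⟨-, hm, -⟩ | hz
  · exact hm.monotoneOn
  · intro a ha b hb _
    rw [hz a ha, hz b hb]

theorem _root_.ClassK0.continuousOn (h : ClassK0 γ) : ContinuousOn γ (Ici 0) := by
  rcases h with ⟨hc, -, -⟩ | hz
  · exact hc
  · exact continuousOn_const.congr fun x hx => hz x hx

theorem _root_.ClassK0.nonneg (h : ClassK0 γ) {r : ℝ} (hr : 0 ≤ r) : 0 ≤ γ r :=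
  h.map_zero ▸ h.monotoneOn self_mem_Ici hr hr

theorem _root_.ClassK0.exists_pos_le (h : ClassK0 γ) {ε : ℝ} (hε : 0 < ε) :
    ∃ δ > 0, γ δ ≤ ε := by
  have hsmall : ∀ᶠ r in nhdsWithin 0 (Ici 0), γ r < ε :=
    (h.continuousOn 0 self_mem_Ici).eventually (gt_mem_nhds (by rwa [h.map_zero]))
  obtain ⟨δ, hδ, hδε⟩ :=
    (eventually_mem_nhdsWithin.and (nhdsWithin_mono _ Ioi_subset_Ici_self hsmall)).exists
  exact ⟨δ, hδ, hδε.le⟩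

theorem _root_.ClassK0.map_add_le (h : ClassK0 γ) {a b : ℝ} (ha : 0 ≤ a) (hb : 0 ≤ b) :
    γ (a + b) ≤ γ (2 * a) + γ (2 * b) := by
  have h2a : 0 ≤ 2 * a := by positivity
  have h2b : 0 ≤ 2 * b := by positivity
  rcases le_total a b with hab | hab
  · have : γ (a + b) ≤ γ (2 * b) := h.monotoneOn (add_nonneg ha hb) h2b (by linarith)
    linarith [h.nonneg h2a]
  · have : γ (a + b) ≤ γ (2 * a) := h.monotoneOn (add_nonneg ha hb) h2a (by linarith)
    linarith [h.nonneg h2b]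

end ClassK0

theorem classKinf_add_id {f : ℝ → ℝ} (hc : ContinuousOn f (Ici 0)) (hm : MonotoneOn f (Ici 0))
    (h0 : f 0 = 0) : ClassKinf (fun r => f r + r) := by
  refine ⟨⟨hc.add continuousOn_id, fun a ha b hb hab => ?_, by simp [h0]⟩, fun c => ?_⟩
  · exact add_lt_add_of_le_of_lt (hm ha hb hab.le) hab
  · refine ⟨max c 0, le_max_right _ _, ?_⟩
    have := hm self_mem_Ici (mem_Ici.2 (le_max_right c 0)) (le_max_right c 0)
    show c ≤ f (max c 0) + max c 0
    linarith [le_max_left c 0]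

-- The summand `r` makes the gain of class `K∞` even when the ULIM gain `η` is only of class `K`.
def uagGain (σ γ η : ℝ → ℝ) (r : ℝ) : ℝ :=
  σ (2 * η r) + γ r + r

theorem classKinf_uagGain {σ γ η : ℝ → ℝ} (hσ : ClassK0 σ) (hγ : ClassK0 γ) (hη : ClassK0 η) :
    ClassKinf (uagGain σ γ η) := by
  have h2η : MapsTo (fun r => 2 * η r) (Ici 0) (Ici 0) :=
    fun r hr => mul_nonneg zero_le_two (hη.nonneg hr)
  refine classKinf_add_id (f := fun r => σ (2 * η r) + γ r) ?_ ?_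
    (by simp [hσ.map_zero, hη.map_zero, hγ.map_zero])
  · exact (hσ.continuousOn.comp (continuousOn_const.mul hη.continuousOn) h2η).add hγ.continuousOn
  · refine MonotoneOn.add (hσ.monotoneOn.comp (fun a ha b hb hab => ?_) h2η) hγ.monotoneOn
    simpa using hη.monotoneOn ha hb hab

theorem phi_eq_phi_shift (S : ControlSystem X U) {t₀ t : ℝ} (ht₀ : 0 ≤ t₀) (ht : t₀ ≤ t)
    (x : X) {u : ℝ → U} (hu : u ∈ S.inputs) :
    S.phi t x u = S.phi (t - t₀) (S.phi t₀ x u) (fun s => u (s + t₀)) := by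
  rw [S.cocycle t₀ ht₀ (t - t₀) (sub_nonneg.2 ht) x u hu, add_sub_cancel]

theorem norm_phi_le_of_le (S : ControlSystem X U) {σ γ : ℝ → ℝ} (hγ : ClassK0 γ)
    (hUGS : ∀ t : ℝ, 0 ≤ t → ∀ x : X, ∀ u ∈ S.inputs, ‖S.phi t x u‖ ≤ σ ‖x‖ + γ (S.Unorm u))
    {t₀ t : ℝ} (ht₀ : 0 ≤ t₀) (ht : t₀ ≤ t) (x : X) {u : ℝ → U} (hu : u ∈ S.inputs) :
    ‖S.phi t x u‖ ≤ σ ‖S.phi t₀ x u‖ + γ (S.Unorm u) := by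
  rw [S.phi_eq_phi_shift ht₀ ht x hu]
  refine (hUGS _ (sub_nonneg.2 ht) _ _ (S.shift_mem u hu t₀ ht₀)).trans ?_
  gcongr
  exact hγ.monotoneOn (S.Unorm_nonneg _) (S.Unorm_nonneg _) (S.shift_norm u hu t₀ ht₀)

/-- If a forward complete control system is ULIM and UGS, then it is UAG. -/
theorem ULIM.UGS.toUAG (S : ControlSystem X U) (h1 : S.ULIM) (h2 : S.UGS) : S.UAG := by
  obtain ⟨η, hη, hULIM⟩ := h1
  obtain ⟨σ, γ, hσ, hγ, hUGS⟩ := h2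
  refine ⟨uagGain σ γ η, .inl (classKinf_uagGain hσ.classK0 hγ.classK0 hη), fun ε hε r hr => ?_⟩
  obtain ⟨δ, hδ, hσδ⟩ := hσ.classK0.exists_pos_le hε
  obtain ⟨τ, hτ, hreach⟩ := hULIM (δ / 2) (half_pos hδ) r hr
  refine ⟨τ, hτ, fun u hu x hx t ht => ?_⟩
  obtain ⟨t₀, ⟨ht₀, ht₀τ⟩, hsmall⟩ := hreach x hx.le u hu
  have hηn := hη.nonneg (S.Unorm_nonneg u)
  calc ‖S.phi t x u‖ ≤ σ ‖S.phi t₀ x u‖ + γ (S.Unorm u) :=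
        S.norm_phi_le_of_le hγ.classK0 hUGS ht₀ (ht₀τ.trans ht) x hu
    _ ≤ σ (δ / 2 + η (S.Unorm u)) + γ (S.Unorm u) := by
        gcongr
        exact hσ.classK0.monotoneOn (norm_nonneg _) (add_nonneg (half_pos hδ).le hηn) hsmall
    _ ≤ σ (2 * (δ / 2)) + σ (2 * η (S.Unorm u)) + γ (S.Unorm u) := by
        gcongr
        exact hσ.classK0.map_add_le (half_pos hδ).le hηn
    _ ≤ ε + uagGain σ γ η (S.Unorm u) := by
        rw [mul_div_cancel₀ _ two_ne_zero]
        unfold uagGain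
        linarith [S.Unorm_nonneg u]

end ControlSystem
end
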